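/- arXiv:2202.08148 — 4 statements merged into one kernel-verified Lean document; each statement's English description precedes it below -/
import Mathlib

section
/- Let n ≥ 2, let Σ be a real n×2 matrix of rank 2, and let η ∈ ℝ². Then there exists π* ∈ ℝⁿ with Σᵀπ* = η such that π* has at most 2 nonzero coordinates and ‖π*‖₁ ≤ ‖π‖₁ for every π ∈ ℝⁿ with Σᵀπ = η. (Sparse-optimality part of Proposition 1: an optimal strategy for the risk-exposure-minimization problem exists whose number of non-zero allocations is at most 2.) -/
/-!
The ℓ¹ norm is coercive, so it attains its minimum on the closed affine set `Aᵀ π = η`; pick a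
minimiser `π` with the fewest nonzero coordinates. If the rows of `A` indexed by the support of
`π` were linearly dependent, a relation `d` among them would be a kernel direction supported
inside that support. Moving from `π` to `π ± t d`, with `t` the largest step before some
coordinate changes sign, the ℓ¹ norm is affine along the segment, so
`‖π + t d‖₁ + ‖π - t d‖₁ = 2 ‖π‖₁` and both ends are again minimisers; but `π + t d` has a
smaller support. Hence the support indexes independent rows in `ℝ²`, so it has at most two
elements.
-/

open Matrix Set Filter Submodule Module

section

variable {ι : Type*} [Fintype ι]

def l1Norm (π : ι → ℝ) : ℝ := ∑ i, |π i|

theorem continuous_l1Norm : Continuous (l1Norm : (ι → ℝ) → ℝ) :=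
  continuous_finsetSum _ fun i _ => (continuous_apply i).abs

theorem norm_le_l1Norm (π : ι → ℝ) : ‖π‖ ≤ l1Norm π :=
  (pi_norm_le_iff_of_nonneg (Finset.sum_nonneg fun _ _ => abs_nonneg _)).2 fun i =>
    Finset.single_le_sum (f := fun j => |π j|) (fun _ _ => abs_nonneg _) (Finset.mem_univ i)

theorem tendsto_l1Norm_cocompact_atTop : Tendsto (l1Norm : (ι → ℝ) → ℝ) (cocompact _) atTop :=
  tendsto_atTop_mono norm_le_l1Norm tendsto_norm_cocompact_atTop

theorem IsClosed.exists_isMinOn_l1Norm {C : Set (ι → ℝ)} (hC : IsClosed C) {π₀ : ι → ℝ}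
    (hπ₀ : π₀ ∈ C) : ∃ π ∈ C, IsMinOn l1Norm C π :=
  continuous_l1Norm.continuousOn.exists_isMinOn' hC hπ₀ <|
    (tendsto_l1Norm_cocompact_atTop.eventually_ge_atTop _).filter_mono inf_le_left

theorem abs_add_add_abs_sub_eq_two_mul_abs {a b : ℝ} (h : |b| ≤ |a|) :
    |a + b| + |a - b| = 2 * |a| := by
  rcases abs_le.1 h with ⟨h₁, h₂⟩
  rcases le_total 0 a with ha | ha
  · rw [abs_of_nonneg ha] at h₁ h₂ ⊢
    rw [abs_of_nonneg (by linarith), abs_of_nonneg (by linarith)]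
    ring
  · rw [abs_of_nonpos ha] at h₁ h₂ ⊢
    rw [abs_of_nonpos (by linarith), abs_of_nonpos (by linarith)]
    ring

theorem l1Norm_add_add_l1Norm_sub {π δ : ι → ℝ} (h : ∀ i, |δ i| ≤ |π i|) :
    l1Norm (π + δ) + l1Norm (π - δ) = 2 * l1Norm π := by
  simp only [l1Norm, Pi.add_apply, Pi.sub_apply, ← Finset.sum_add_distrib, Finset.mul_sum,
    abs_add_add_abs_sub_eq_two_mul_abs (h _)]

theorem exists_abs_mul_le_abs_and_add_mul_eq_zero (π : ι → ℝ) {d : ι → ℝ} (hd : d ≠ 0) :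
    ∃ t : ℝ, (∀ j, |t * d j| ≤ |π j|) ∧ ∃ i, d i ≠ 0 ∧ π i + t * d i = 0 := by
  classical
  obtain ⟨i₀, hi₀⟩ := Function.ne_iff.1 hd
  obtain ⟨i, hi, hmin⟩ := (Finset.univ.filter fun j => d j ≠ 0).exists_min_image
    (fun j => |π j| / |d j|) ⟨i₀, Finset.mem_filter.2 ⟨Finset.mem_univ _, hi₀⟩⟩
  have hdi : d i ≠ 0 := (Finset.mem_filter.1 hi).2
  refine ⟨-(π i / d i), fun j => ?_, i, hdi, by field_simp; ring⟩
  rcases eq_or_ne (d j) 0 with hdj | hdj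
  · simp [hdj]
  · calc |-(π i / d i) * d j| = |π i| / |d i| * |d j| := by rw [abs_mul, abs_neg, abs_div]
      _ ≤ |π j| / |d j| * |d j| :=
        mul_le_mul_of_nonneg_right (hmin j (Finset.mem_filter.2 ⟨Finset.mem_univ _, hdj⟩))
          (abs_nonneg _)
      _ = |π j| := div_mul_cancel₀ _ (abs_ne_zero.2 hdj)

theorem IsMinOn.exists_isMinOn_l1Norm_support_ssubset {C : Set (ι → ℝ)} {π d : ι → ℝ}
    (hmin : IsMinOn l1Norm C π) (hline : ∀ t : ℝ, π + t • d ∈ C) (hd : d ≠ 0)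
    (hsupp : d.support ⊆ π.support) :
    ∃ π' ∈ C, IsMinOn l1Norm C π' ∧ π'.support ⊂ π.support := by
  obtain ⟨t, hle, i, hdi, hi⟩ := exists_abs_mul_le_abs_and_add_mul_eq_zero π hd
  have hsum := l1Norm_add_add_l1Norm_sub (δ := t • d) hle
  have hplus : l1Norm π ≤ l1Norm (π + t • d) := hmin (hline t)
  have hminus : l1Norm π ≤ l1Norm (π - t • d) := by
    simpa [sub_eq_add_neg, neg_smul] using hmin (hline (-t))
  refine ⟨π + t • d, hline t, fun ρ hρ => ?_, ?_⟩
  · have : l1Norm π ≤ l1Norm ρ := hmin hρ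
    show l1Norm (π + t • d) ≤ l1Norm ρ
    linarith
  · have hsub : (π + t • d).support ⊆ π.support := fun j hj => by
      by_contra hπj
      have hdj : d j = 0 := Function.notMem_support.1 fun h => hπj (hsupp h)
      simp_all
    exact (ssubset_iff_of_subset hsub).2 ⟨i, hsupp hdi, by simpa using hi⟩

variable {E : Type*} [AddCommGroup E] [Module ℝ E]

theorem LinearMap.isClosed_preimage_singleton (f : (ι → ℝ) →ₗ[ℝ] E) (η : E) :
    IsClosed (f ⁻¹' {η}) := by
  rcases (f ⁻¹' {η}).eq_empty_or_nonempty with h | ⟨π₀, hπ₀⟩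
  · exact h ▸ isClosed_empty
  have : f ⁻¹' {η} = (· - π₀) ⁻¹' (LinearMap.ker f : Set (ι → ℝ)) := by
    ext π
    simp_all [sub_eq_zero]
  rw [this]
  exact (LinearMap.ker f).closed_of_finiteDimensional.preimage (continuous_sub_right π₀)

theorem exists_isMinOn_l1Norm_linearIndepOn_support (v : ι → E) {η : E}
    (hη : η ∈ span ℝ (range v)) :
    ∃ π ∈ Fintype.linearCombination ℝ v ⁻¹' {η},
      IsMinOn l1Norm (Fintype.linearCombination ℝ v ⁻¹' {η}) π ∧ LinearIndepOn ℝ v π.support := by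
  set f := Fintype.linearCombination ℝ v
  set C := f ⁻¹' {η}
  obtain ⟨π₀, hπ₀⟩ := (mem_span_range_iff_exists_fun ℝ).1 hη
  rw [← Fintype.linearCombination_apply] at hπ₀
  obtain ⟨πm, hπmC, hπm⟩ := (f.isClosed_preimage_singleton η).exists_isMinOn_l1Norm hπ₀
  obtain ⟨π, ⟨hπC, hπ⟩, hleast⟩ := (measure fun π : ι → ℝ => π.support.ncard).wf.has_min
    {π | π ∈ C ∧ IsMinOn l1Norm C π} ⟨πm, hπmC, hπm⟩
  refine ⟨π, hπC, hπ, by_contra fun hdep => ?_⟩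
  obtain ⟨l, hl, hlv, hl0⟩ := linearDepOn_iff'.1 hdep
  have hline : ∀ t : ℝ, π + t • ⇑l ∈ C := fun t => by
    have hfl : f l = 0 := by
      rw [← hlv, Finsupp.linearCombination_apply,
        Finsupp.sum_fintype _ _ fun i => zero_smul ℝ (v i)]
      exact Fintype.linearCombination_apply ℝ v l
    simp only [C, mem_preimage, map_add, map_smul, hfl, smul_zero, add_zero]
    exact hπC
  obtain ⟨π', hπ'C, hπ', hss⟩ := hπ.exists_isMinOn_l1Norm_support_ssubset hline
    (Finsupp.coe_eq_zero.not.2 hl0)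
    (by rw [Finsupp.fun_support_eq]; exact (Finsupp.mem_supported ℝ l).1 hl)
  exact hleast π' ⟨hπ'C, hπ'⟩ (ncard_lt_ncard hss)

end

theorem LinearIndepOn.ncard_le_finrank {R M ι : Type*} [Ring R] [StrongRankCondition R]
    [AddCommGroup M] [Module R M] [Module.Finite R M] {v : ι → M} {s : Set ι}
    (hs : LinearIndepOn R v s) : s.ncard ≤ finrank R M := by
  rw [← Nat.card_coe_set_eq, Nat.card]
  simpa using Cardinal.toNat_le_toNat hs.linearIndependent.cardinalMk_le_finrank
    Cardinal.natCast_lt_aleph0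

theorem Matrix.transpose_mulVec_eq_linearCombination {m n R : Type*} [Fintype m] [CommSemiring R]
    (A : Matrix m n R) (π : m → R) : Aᵀ *ᵥ π = Fintype.linearCombination R A.row π := by
  rw [mulVec_transpose, vecMul_eq_sum]
  exact (Fintype.linearCombination_apply R A.row π).symm

theorem Matrix.span_row_eq_top_of_rank_eq {m n K : Type*} [Finite m] [Fintype n] [Field K]
    {A : Matrix m n K} (hA : A.rank = Fintype.card n) : span K (range A.row) = ⊤ :=
  eq_top_of_finrank_eq (by rw [← rank_eq_finrank_span_row, hA, finrank_fintype_fun_eq_card])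

theorem sparse_optimal_two_general (n : ℕ) (A : Matrix (Fin n) (Fin 2) ℝ)
    (hrank : A.rank = 2) (η : Fin 2 → ℝ) :
    ∃ πstar : Fin n → ℝ, Aᵀ *ᵥ πstar = η ∧ {i | πstar i ≠ 0}.ncard ≤ 2 ∧
      ∀ π : Fin n → ℝ, Aᵀ *ᵥ π = η → ∑ i, |πstar i| ≤ ∑ i, |π i| := by
  have hη : η ∈ span ℝ (range A.row) := by
    rw [span_row_eq_top_of_rank_eq (by rwa [Fintype.card_fin])]
    trivial
  obtain ⟨π, hπ, hmin, hindep⟩ := exists_isMinOn_l1Norm_linearIndepOn_support A.row hη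
  refine ⟨π, (transpose_mulVec_eq_linearCombination A π).trans hπ, ?_, fun π' hπ' => ?_⟩
  · exact hindep.ncard_le_finrank.trans_eq (finrank_fin_fun ℝ)
  · exact hmin ((transpose_mulVec_eq_linearCombination A π').symm.trans hπ')

/-- Sparse-optimality part of Proposition 1: for an n×2 exposure matrix of rank 2,
there is an ℓ1-minimal feasible allocation with at most 2 nonzero coordinates. -/
theorem sparse_optimal_two (n : ℕ) (hn : 2 ≤ n) (A : Matrix (Fin n) (Fin 2) ℝ)
    (hrank : A.rank = 2) (η : Fin 2 → ℝ) :
    ∃ πstar : Fin n → ℝ, Aᵀ *ᵥ πstar = η ∧ {i | πstar i ≠ 0}.ncard ≤ 2 ∧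
      ∀ π : Fin n → ℝ, Aᵀ *ᵥ π = η → ∑ i, |πstar i| ≤ ∑ i, |π i| :=
  sparse_optimal_two_general n A hrank η
end

section
/- Let m ≥ 1, n ≥ m, let Σ be a real n×m matrix of rank m, and let η ∈ ℝᵐ. Then there exists π* ∈ ℝⁿ with Σᵀπ* = η such that π* has at most m nonzero coordinates and ‖π*‖₁ ≤ ‖π‖₁ for every π ∈ ℝⁿ with Σᵀπ = η. (Generalization of Proposition 1 to m independent risk factors, as stated in the paper's footnote: an optimal strategy exists whose number of non-zero allocations is at most m.) -/
open Matrix Finset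

private noncomputable def sgn (x : ℝ) : ℝ := if 0 ≤ x then 1 else -1

private lemma sgn_mul_self (x : ℝ) : sgn x * x = |x| := by
  unfold sgn; split_ifs with h
  · rw [one_mul, abs_of_nonneg h]
  · rw [abs_of_neg (lt_of_not_ge h)]; ring

private lemma abs_sgn (x : ℝ) : |sgn x| = 1 := by
  unfold sgn; split_ifs <;> simp

private lemma sgn_ne_zero (x : ℝ) : sgn x ≠ 0 := by
  unfold sgn; split_ifs <;> norm_num

private lemma abs_eq_sgn_mul {x y : ℝ} (h : 0 ≤ sgn x * y) : |y| = sgn x * y := by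
  have h1 : |sgn x * y| = |y| := by rw [abs_mul, abs_sgn, one_mul]
  rw [← h1, abs_of_nonneg h]

/-- The sum rewriting step: if all `sgn (π i) * (π i + t * c i)` are nonneg, the new ℓ1 sum
is the old one plus `t * L`. -/
private lemma sum_abs_shift {n : ℕ} (π c : Fin n → ℝ) (t : ℝ)
    (hnn : ∀ i, 0 ≤ sgn (π i) * (π i + t * c i)) :
    ∑ i, |π i + t * c i| = (∑ i, |π i|) + t * ∑ i, sgn (π i) * c i := by
  calc ∑ i, |π i + t * c i| = ∑ i, sgn (π i) * (π i + t * c i) :=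
        Finset.sum_congr rfl fun i _ => abs_eq_sgn_mul (hnn i)
    _ = ∑ i, (sgn (π i) * π i + t * (sgn (π i) * c i)) := by
        apply Finset.sum_congr rfl; intro i _; ring
    _ = (∑ i, sgn (π i) * π i) + t * ∑ i, sgn (π i) * c i := by
        rw [Finset.sum_add_distrib, Finset.mul_sum]
    _ = (∑ i, |π i|) + t * ∑ i, sgn (π i) * c i := by
        congr 1; exact Finset.sum_congr rfl fun i _ => sgn_mul_self (π i)

private lemma descent_aux {m n : ℕ} (A : Matrix (Fin n) (Fin m) ℝ) (η : Fin m → ℝ)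
    (π : Fin n → ℝ) (hπ : Aᵀ *ᵥ π = η)
    (c : Fin n → ℝ) (hker : Aᵀ *ᵥ c = 0)
    (hsupp : ∀ i, π i = 0 → c i = 0)
    (hL : ∑ i, sgn (π i) * c i = 0)
    (hneg : ∃ j, π j ≠ 0 ∧ sgn (π j) * c j < 0) :
    ∃ π', Aᵀ *ᵥ π' = η ∧ (∑ i, |π' i| = ∑ i, |π i|) ∧
      (univ.filter (fun i => π' i ≠ 0)).card < (univ.filter (fun i => π i ≠ 0)).card := by
  classical
  obtain ⟨j, hjπ, hjneg⟩ := hneg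
  set T : Finset (Fin n) := univ.filter (fun i => π i ≠ 0 ∧ sgn (π i) * c i < 0) with hT
  have hTne : T.Nonempty := ⟨j, by simp [hT, hjπ, hjneg]⟩
  set t₀ : ℝ := T.inf' hTne (fun i => |π i| / (-(sgn (π i) * c i))) with ht₀
  have ht₀pos : 0 < t₀ := by
    rw [ht₀, Finset.lt_inf'_iff]
    intro i hi
    rw [hT, Finset.mem_filter] at hi
    exact div_pos (abs_pos.mpr hi.2.1) (neg_pos.mpr hi.2.2)
  obtain ⟨j₀, hj₀T, hj₀⟩ := Finset.exists_mem_eq_inf' hTne (fun i => |π i| / (-(sgn (π i) * c i)))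
  have hj₀' := hj₀T
  rw [hT, Finset.mem_filter] at hj₀'
  have hπj₀ : π j₀ ≠ 0 := hj₀'.2.1
  have hrj₀ : sgn (π j₀) * c j₀ < 0 := hj₀'.2.2
  -- the new candidate
  refine ⟨fun i => π i + t₀ * c i, ?_, ?_, ?_⟩
  · -- feasibility
    have : (fun i => π i + t₀ * c i) = π + t₀ • c := by funext i; simp [mul_comm]
    rw [this, mulVec_add, mulVec_smul, hπ, hker, smul_zero, add_zero]
  · -- nonnegativity of signs along the move
    have hnn : ∀ i, 0 ≤ sgn (π i) * (π i + t₀ * c i) := by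
      intro i
      by_cases hi : π i = 0
      · rw [hi, hsupp i hi]; simp
      · have hexp : sgn (π i) * (π i + t₀ * c i) = |π i| + t₀ * (sgn (π i) * c i) := by
          rw [mul_add, sgn_mul_self]; ring
        rw [hexp]
        by_cases hr : sgn (π i) * c i < 0
        · have hiT : i ∈ T := by rw [hT, Finset.mem_filter]; exact ⟨Finset.mem_univ i, hi, hr⟩
          have hle : t₀ ≤ |π i| / (-(sgn (π i) * c i)) := Finset.inf'_le _ hiT
          have := (le_div_iff₀ (neg_pos.mpr hr)).mp hle
          nlinarith
        · push_neg at hr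
          have : 0 ≤ t₀ * (sgn (π i) * c i) := mul_nonneg ht₀pos.le hr
          have := abs_nonneg (π i)
          linarith
    rw [sum_abs_shift π c t₀ hnn, hL, mul_zero, add_zero]
  · -- support shrinks
    have hj₀zero : π j₀ + t₀ * c j₀ = 0 := by
      have hr0 : sgn (π j₀) * c j₀ ≠ 0 := ne_of_lt hrj₀
      have ht₀j : t₀ * (sgn (π j₀) * c j₀) = -|π j₀| := by
        rw [ht₀, hj₀, div_mul_eq_mul_div, div_neg, mul_div_assoc, div_self hr0, mul_one]
      have : sgn (π j₀) * (π j₀ + t₀ * c j₀) = 0 := by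
        rw [mul_add, sgn_mul_self]
        have : sgn (π j₀) * (t₀ * c j₀) = t₀ * (sgn (π j₀) * c j₀) := by ring
        rw [this, ht₀j]; ring
      rcases mul_eq_zero.mp this with h | h
      · exact absurd h (sgn_ne_zero _)
      · exact h
    have hsub : univ.filter (fun i => (π i + t₀ * c i) ≠ 0) ⊆
        (univ.filter (fun i => π i ≠ 0)).erase j₀ := by
      intro i hi
      rw [Finset.mem_filter] at hi
      rw [Finset.mem_erase, Finset.mem_filter]
      refine ⟨?_, Finset.mem_univ i, ?_⟩
      · rintro rfl; exact hi.2 hj₀zero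
      · intro hπi; exact hi.2 (by rw [hπi, hsupp i hπi]; ring)
    calc (univ.filter (fun i => (π i + t₀ * c i) ≠ 0)).card
        ≤ ((univ.filter (fun i => π i ≠ 0)).erase j₀).card := Finset.card_le_card hsub
      _ < (univ.filter (fun i => π i ≠ 0)).card :=
          Finset.card_erase_lt_of_mem (by rw [Finset.mem_filter]; exact ⟨Finset.mem_univ j₀, hπj₀⟩)

private lemma descent {m n : ℕ} (A : Matrix (Fin n) (Fin m) ℝ) (η : Fin m → ℝ)
    (π : Fin n → ℝ) (hπ : Aᵀ *ᵥ π = η)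
    (hmin : ∀ π', Aᵀ *ᵥ π' = η → ∑ i, |π i| ≤ ∑ i, |π' i|)
    (hcard : m < (univ.filter (fun i => π i ≠ 0)).card) :
    ∃ π', Aᵀ *ᵥ π' = η ∧ (∑ i, |π' i| = ∑ i, |π i|) ∧
      (univ.filter (fun i => π' i ≠ 0)).card < (univ.filter (fun i => π i ≠ 0)).card := by
  classical
  set S : Finset (Fin n) := univ.filter (fun i => π i ≠ 0) with hS
  have hmemS : ∀ i, i ∈ S ↔ π i ≠ 0 := by intro i; rw [hS, Finset.mem_filter]; simp
  -- the rows indexed by the support are linearly dependent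
  have hnotLI : ¬ LinearIndependent ℝ (fun i : S => A i) := by
    intro h
    have h1 := h.fintype_card_le_finrank
    rw [Module.finrank_fin_fun, Fintype.card_coe] at h1
    omega
  obtain ⟨g, hg0, i₀, hgi₀⟩ := Fintype.not_linearIndependent_iff.mp hnotLI
  set c : Fin n → ℝ := fun i => if h : i ∈ S then g ⟨i, h⟩ else 0 with hc
  have hsupp : ∀ i, π i = 0 → c i = 0 := by
    intro i hi
    rw [hc]; simp only; rw [dif_neg]
    rw [hmemS]; exact fun h => h hi
  have hci₀ : c (i₀ : Fin n) ≠ 0 := by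
    rw [hc]; simp only; rw [dif_pos i₀.2]
    convert hgi₀ using 2
  have hπi₀ : π (i₀ : Fin n) ≠ 0 := (hmemS _).mp i₀.2
  -- c lies in the kernel
  have hker : Aᵀ *ᵥ c = 0 := by
    funext k
    show ∑ i, Aᵀ k i * c i = 0
    have hzero : ∀ i ∈ univ, i ∉ S → Aᵀ k i * c i = 0 := by
      intro i _ hi
      rw [hc]; simp only; rw [dif_neg hi, mul_zero]
    rw [← Finset.sum_subset (Finset.subset_univ S) hzero]
    have h1 : ∑ i ∈ S, Aᵀ k i * c i = ∑ i ∈ S.attach, Aᵀ k (i : Fin n) * c (i : Fin n) :=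
      (Finset.sum_attach S _).symm
    rw [h1]
    have h2 : ∀ i : S, Aᵀ k (i : Fin n) * c (i : Fin n) = g i * A (i : Fin n) k := by
      intro i
      rw [hc]; simp only; rw [dif_pos i.2, transpose_apply, mul_comm]
    calc ∑ i ∈ S.attach, Aᵀ k (i : Fin n) * c (i : Fin n)
        = ∑ i : S, g i * A (i : Fin n) k := Finset.sum_congr rfl fun i _ => h2 i
      _ = 0 := by
          have := congrFun hg0 k
          simpa [Finset.sum_apply, Pi.smul_apply, smul_eq_mul] using this
  -- the "derivative" L vanishes by minimality
  set L : ℝ := ∑ i, sgn (π i) * c i with hLdef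
  have hSne : S.Nonempty := Finset.card_pos.mp (by omega)
  set δ : ℝ := S.inf' hSne (fun i => |π i| / (|c i| + 1)) with hδ
  have hδpos : 0 < δ := by
    rw [hδ, Finset.lt_inf'_iff]
    intro i hi
    exact div_pos (abs_pos.mpr ((hmemS i).mp hi)) (by positivity)
  have hkey : ∀ t : ℝ, |t| ≤ δ → ∑ i, |π i + t * c i| = (∑ i, |π i|) + t * L := by
    intro t ht
    apply sum_abs_shift
    intro i
    by_cases hi : π i = 0
    · rw [hi, hsupp i hi]; simp
    · have hiS : i ∈ S := (hmemS i).mpr hi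
      have hle : δ ≤ |π i| / (|c i| + 1) := Finset.inf'_le _ hiS
      have h1 : δ * (|c i| + 1) ≤ |π i| := (le_div_iff₀ (by positivity)).mp hle
      have hexp : sgn (π i) * (π i + t * c i) = |π i| + t * (sgn (π i) * c i) := by
        rw [mul_add, sgn_mul_self]; ring
      rw [hexp]
      have h2 : |t * (sgn (π i) * c i)| ≤ δ * |c i| := by
        rw [abs_mul, abs_mul, abs_sgn, one_mul]
        exact mul_le_mul ht (le_refl _) (abs_nonneg _) hδpos.le
      have h3 := neg_abs_le (t * (sgn (π i) * c i))
      nlinarith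
  have hfeas : ∀ t : ℝ, Aᵀ *ᵥ (π + t • c) = η := by
    intro t
    rw [mulVec_add, mulVec_smul, hπ, hker, smul_zero, add_zero]
  have happly : ∀ t : ℝ, ∑ i, |(π + t • c) i| = ∑ i, |π i + t * c i| := by
    intro t; apply Finset.sum_congr rfl; intro i _; simp [mul_comm]
  have h1 : (∑ i, |π i|) ≤ (∑ i, |π i|) + δ * L := by
    have := hmin (π + δ • c) (hfeas δ)
    rwa [happly, hkey δ (by rw [abs_of_nonneg hδpos.le])] at this
  have h2 : (∑ i, |π i|) ≤ (∑ i, |π i|) + (-δ) * L := by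
    have := hmin (π + (-δ) • c) (hfeas (-δ))
    rwa [happly, hkey (-δ) (by rw [abs_neg, abs_of_nonneg hδpos.le])] at this
  have hL : L = 0 := by nlinarith
  -- apply the descent step with c or -c
  have hri₀ : sgn (π (i₀ : Fin n)) * c (i₀ : Fin n) ≠ 0 := mul_ne_zero (sgn_ne_zero _) hci₀
  rcases lt_or_gt_of_ne hri₀ with h | h
  · exact descent_aux A η π hπ c hker hsupp hL ⟨(i₀ : Fin n), hπi₀, h⟩
  · apply descent_aux A η π hπ (fun i => -(c i))
    · have : (fun i => -(c i)) = -c := rfl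
      rw [this, mulVec_neg, hker, neg_zero]
    · intro i hi; rw [hsupp i hi, neg_zero]
    · have : ∑ i, sgn (π i) * (-(c i)) = -L := by
        rw [hLdef, ← Finset.sum_neg_distrib]
        apply Finset.sum_congr rfl; intro i _; ring
      rw [this, hL, neg_zero]
    · exact ⟨(i₀ : Fin n), hπi₀, by simp only [mul_neg]; linarith⟩

private lemma exists_min {m n : ℕ} (A : Matrix (Fin n) (Fin m) ℝ) (η : Fin m → ℝ)
    (π₀ : Fin n → ℝ) (hπ₀ : Aᵀ *ᵥ π₀ = η) :
    ∃ π₁, Aᵀ *ᵥ π₁ = η ∧ ∀ π, Aᵀ *ᵥ π = η → ∑ i, |π₁ i| ≤ ∑ i, |π i| := by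
  classical
  set f : (Fin n → ℝ) → ℝ := fun π => ∑ i, |π i| with hf
  have hfc : Continuous f := by
    apply continuous_finset_sum
    intro i _
    exact (continuous_apply i).abs
  set C : Set (Fin n → ℝ) := {π | Aᵀ *ᵥ π = η ∧ f π ≤ f π₀} with hC
  have hclosed : IsClosed C := by
    have h1 : IsClosed {π : Fin n → ℝ | Aᵀ *ᵥ π = η} := by
      have : {π : Fin n → ℝ | Aᵀ *ᵥ π = η} = (Aᵀ.mulVecLin) ⁻¹' {η} := by
        ext π
        simp only [Set.mem_setOf_eq, Set.mem_preimage, Set.mem_singleton_iff,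
          Matrix.mulVecLin_apply]
      rw [this]
      exact IsClosed.preimage (Aᵀ.mulVecLin.continuous_of_finiteDimensional) isClosed_singleton
    have h2 : IsClosed {π : Fin n → ℝ | f π ≤ f π₀} := isClosed_le hfc continuous_const
    exact h1.inter h2
  have hbdd : C ⊆ Metric.closedBall 0 (f π₀) := by
    intro π hπ
    rw [Metric.mem_closedBall, dist_zero_right]
    have hnonneg : ∀ i, 0 ≤ |π i| := fun i => abs_nonneg _
    have hle : ∀ i, ‖π i‖ ≤ f π₀ := by
      intro i
      have := Finset.single_le_sum (f := fun i => |π i|) (fun i _ => hnonneg i) (Finset.mem_univ i)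
      rw [Real.norm_eq_abs]
      exact this.trans hπ.2
    have h0 : (0:ℝ) ≤ f π₀ := Finset.sum_nonneg fun i _ => abs_nonneg _
    exact (pi_norm_le_iff_of_nonneg h0).mpr hle
  have hcompact : IsCompact C :=
    Metric.isCompact_of_isClosed_isBounded hclosed
      (Metric.isBounded_closedBall.subset hbdd)
  have hCne : C.Nonempty := ⟨π₀, hπ₀, le_refl _⟩
  obtain ⟨π₁, hπ₁C, hminOn⟩ := hcompact.exists_isMinOn hCne hfc.continuousOn
  refine ⟨π₁, hπ₁C.1, fun π hπ => ?_⟩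
  by_cases h : f π ≤ f π₀
  · exact isMinOn_iff.mp hminOn π ⟨hπ, h⟩
  · have h1 : f π₁ ≤ f π₀ := hπ₁C.2
    have h2 : f π₀ ≤ f π := (not_le.mp h).le
    exact h1.trans h2

/-- Generalization of Proposition 1 to m independent risk factors: an ℓ1-minimal
feasible allocation exists with at most m nonzero coordinates. -/
theorem sparse_optimal_m (m n : ℕ) (hm : 1 ≤ m) (hn : m ≤ n)
    (A : Matrix (Fin n) (Fin m) ℝ) (hrank : A.rank = m) (η : Fin m → ℝ) :
    ∃ πstar : Fin n → ℝ, Aᵀ *ᵥ πstar = η ∧ {i | πstar i ≠ 0}.ncard ≤ m ∧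
      ∀ π : Fin n → ℝ, Aᵀ *ᵥ π = η → ∑ i, |πstar i| ≤ ∑ i, |π i| := by
  classical
  -- feasibility: Aᵀ is surjective
  have hsurj : Function.Surjective (Aᵀ.mulVecLin) := by
    rw [← LinearMap.range_eq_top]
    apply Submodule.eq_top_of_finrank_eq
    rw [Module.finrank_fin_fun]
    have h1 : Aᵀ.rank = m := by rw [Matrix.rank_transpose, hrank]
    exact h1
  obtain ⟨π₀, hπ₀⟩ := hsurj η
  rw [Matrix.mulVecLin_apply] at hπ₀
  obtain ⟨π₁, hπ₁, hmin₁⟩ := exists_min A η π₀ hπ₀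
  -- ncard equals the Finset card of the support
  have hncard : ∀ π : Fin n → ℝ,
      {i | π i ≠ 0}.ncard = (univ.filter (fun i => π i ≠ 0)).card := by
    intro π
    rw [← Set.ncard_coe_finset]
    congr 1
    ext i
    simp
  -- induction on a bound for the support size
  suffices hkey : ∀ k : ℕ, ∀ π : Fin n → ℝ, Aᵀ *ᵥ π = η →
      (∀ π', Aᵀ *ᵥ π' = η → ∑ i, |π i| ≤ ∑ i, |π' i|) →
      (univ.filter (fun i => π i ≠ 0)).card ≤ k →
      ∃ πstar : Fin n → ℝ, Aᵀ *ᵥ πstar = η ∧ {i | πstar i ≠ 0}.ncard ≤ m ∧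
        ∀ π' : Fin n → ℝ, Aᵀ *ᵥ π' = η → ∑ i, |πstar i| ≤ ∑ i, |π' i| by
    exact hkey (univ.filter (fun i => π₁ i ≠ 0)).card π₁ hπ₁ hmin₁ le_rfl
  intro k
  induction k with
  | zero =>
      intro π hπ hminπ hcard
      exact ⟨π, hπ, by rw [hncard]; omega, hminπ⟩
  | succ k ih =>
      intro π hπ hminπ hcard
      by_cases hle : (univ.filter (fun i => π i ≠ 0)).card ≤ m
      · exact ⟨π, hπ, by rw [hncard]; omega, hminπ⟩
      · push_neg at hle
        obtain ⟨π', hπ', hsum', hcard'⟩ := descent A η π hπ hminπ hle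
        have hmin' : ∀ π'', Aᵀ *ᵥ π'' = η → ∑ i, |π' i| ≤ ∑ i, |π'' i| := by
          intro π'' hπ''
          rw [hsum']
          exact hminπ π'' hπ''
        exact ih π' hπ' hmin' (by omega)
end

section
/- Let γ > 0, ρ ∈ (−1, 1), X > 0, σˣ > 0, λ, λˣ, P_X ∈ ℝ, and let O ≠ 0, S > 0, Δ ∈ ℝ, V_X ≠ 0 be reals (option price, stock price, option delta ∂O/∂S, and option sensitivity ∂O/∂X). Define the 2×2 matrix Σ with rows (√X, 0) and (Δ·S·√X/O, V_X·σˣ·√X/O), define a = √X·(λ + ρσˣP_X, λˣ + σˣP_X) ∈ ℝ², and set η* = (1/γ)(ΦΦᵀ)⁻¹a where Φ = [[1,0],[ρ,√(1−ρ²)]]. Then the pair π = (πˢ, πᴼ) defined by πᴼ = ( O·(λˣ − ρλ)/(γσˣ(1−ρ²)) + O·P_X/γ ) / V_X and πˢ = (λ − ρλˣ)/(γ(1−ρ²)) − πᴼ·(S/O)·Δ satisfies Σᵀπ = η*, and it is the unique solution of this linear system. (Explicit optimal stock and option allocations (4.3) for the Heston model.) -/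
open Matrix

/-- Explicit optimal stock and option allocations (4.3) for the Heston model:
the pair (πˢ, πᴼ) is the unique solution of Σᵀπ = η*. -/
theorem heston_explicit_allocation (γ ρ X σx lam lamX PX O S Δ VX : ℝ)
    (hγ : 0 < γ) (hρ1 : -1 < ρ) (hρ2 : ρ < 1) (hX : 0 < X) (hσx : 0 < σx)
    (hO : O ≠ 0) (hS : 0 < S) (hVX : VX ≠ 0)
    (A : Matrix (Fin 2) (Fin 2) ℝ)
    (hA : A = !![Real.sqrt X, 0; Δ * S * Real.sqrt X / O, VX * σx * Real.sqrt X / O])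
    (a : Fin 2 → ℝ)
    (ha : a = ![Real.sqrt X * (lam + ρ * σx * PX), Real.sqrt X * (lamX + σx * PX)])
    (Φ : Matrix (Fin 2) (Fin 2) ℝ)
    (hΦ : Φ = !![1, 0; ρ, Real.sqrt (1 - ρ ^ 2)])
    (ηstar : Fin 2 → ℝ) (hη : ηstar = (1 / γ) • ((Φ * Φᵀ)⁻¹ *ᵥ a))
    (πO πS : ℝ)
    (hπO : πO = (O * (lamX - ρ * lam) / (γ * σx * (1 - ρ ^ 2)) + O * PX / γ) / VX)
    (hπS : πS = (lam - ρ * lamX) / (γ * (1 - ρ ^ 2)) - πO * (S / O) * Δ) :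
    Aᵀ *ᵥ ![πS, πO] = ηstar ∧
      ∀ π : Fin 2 → ℝ, Aᵀ *ᵥ π = ηstar → π = ![πS, πO] := by
  have h1 : (0:ℝ) < 1 - ρ ^ 2 := by nlinarith
  have hs : 0 < Real.sqrt X := Real.sqrt_pos.mpr hX
  have hc : Real.sqrt (1 - ρ ^ 2) ^ 2 = 1 - ρ ^ 2 := Real.sq_sqrt h1.le
  have hmul : Φ * Φᵀ = !![(1:ℝ), ρ; ρ, 1] := by
    subst hΦ
    ext i j
    fin_cases i <;> fin_cases j <;>
      simp [Matrix.mul_apply, Matrix.transpose_apply, Fin.sum_univ_two,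
        Matrix.cons_val_zero, Matrix.cons_val_one, Matrix.vecHead, Matrix.vecTail] <;>
      nlinarith [hc]
  have hinv : (Φ * Φᵀ)⁻¹ = (1 - ρ ^ 2)⁻¹ • !![(1:ℝ), -ρ; -ρ, 1] := by
    rw [hmul, Matrix.inv_def, Matrix.adjugate_fin_two_of, Matrix.det_fin_two_of,
      Ring.inverse_eq_inv]
    congr 1
    ring
  have hη0 : ηstar 0 = (lam - ρ * lamX) / (γ * (1 - ρ ^ 2)) * Real.sqrt X := by
    rw [hη, hinv, ha]
    simp [Matrix.mulVec, dotProduct, Fin.sum_univ_two]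
    field_simp
    ring
  have hη1 : ηstar 1 =
      (lamX - ρ * lam + σx * PX * (1 - ρ ^ 2)) / (γ * (1 - ρ ^ 2)) * Real.sqrt X := by
    rw [hη, hinv, ha]
    simp [Matrix.mulVec, dotProduct, Fin.sum_univ_two]
    field_simp
    ring
  have key : Aᵀ *ᵥ ![πS, πO] = ηstar := by
    ext i
    fin_cases i
    · rw [hA]
      simp [Matrix.mulVec, dotProduct, Fin.sum_univ_two, hη0, hπS]
      field_simp
      ring
    · rw [hA]
      simp [Matrix.mulVec, dotProduct, Fin.sum_univ_two, hη1, hπO]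
      field_simp
  refine ⟨key, fun π hπ => ?_⟩
  rw [← key] at hπ
  have h0 := congrFun hπ 0
  have h11 := congrFun hπ 1
  rw [hA] at h0 h11
  simp [Matrix.mulVec, dotProduct, Fin.sum_univ_two] at h0 h11
  have hk : VX * σx * Real.sqrt X / O ≠ 0 := by
    apply div_ne_zero _ hO
    positivity
  have hπ1 : π 1 = πO := by
    rcases h11 with h | ((h | h) | h) | h
    exacts [h, absurd h hVX, absurd h hσx.ne', absurd h hs.ne', absurd h hO]
  have hπ0 : π 0 = πS := by
    rw [hπ1] at h0
    exact mul_left_cancel₀ (ne_of_gt hs)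
      (by linarith : Real.sqrt X * π 0 = Real.sqrt X * πS)
  ext i
  fin_cases i <;> simp [hπ0, hπ1]
end

section
/- Let γ > 0, ρ ∈ (−1, 1), X > 0, σˣ > 0, λ, λˣ, P_X ∈ ℝ, O ≠ 0, V_X ≠ 0, and suppose the derivative is equity-neutral, i.e. its delta Δ = 0, so the variance matrix Σ is the 2×2 diagonal-structured matrix with rows (√X, 0) and (0, V_X·σˣ·√X/O). Then the unique solution π = (πˢ, πᴼ) of Σᵀπ = η*, where η* = (1/γ)(ΦΦᵀ)⁻¹(√X·(λ + ρσˣP_X), √X·(λˣ + σˣP_X)), has stock allocation πˢ = (λ − ρλˣ)/(γ(1−ρ²)), which does not depend on O, V_X, σˣ or P_X; consequently, for every equity-neutral derivative choice, the risk exposure satisfies ‖π‖₁ = |πˢ| + |πᴼ| ≥ |λ − ρλˣ|/(γ(1−ρ²)). (Invariance of the stock allocation and the natural lower bound on risk exposure when completing the market with VIX products.) -/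
/-!
Since ΦΦᵀ = [[1, ρ], [ρ, 1]], the first component of η* is √X (λ − ρλˣ) / (γ(1 − ρ²)): the
terms ρσˣP_X coming from the two entries cancel. Because Σ is diagonal with nonzero entries,
Σᵀπ = η* is solved coordinatewise, so πˢ = η*₀ / √X, and ‖π‖₁ ≥ |πˢ| gives the bound.
-/

open Matrix

theorem cholesky_fin_two_mul_transpose {ρ : ℝ} (hρ : ρ ^ 2 ≤ 1) :
    !![1, 0; ρ, √(1 - ρ ^ 2)] * (!![1, 0; ρ, √(1 - ρ ^ 2)])ᵀ = !![1, ρ; ρ, 1] := by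
  ext i j
  fin_cases i <;> fin_cases j <;>
    simp [mul_apply, Fin.sum_univ_two, Real.mul_self_sqrt (sub_nonneg.2 hρ)]
  ring

theorem inv_mulVec_zero_fin_two {K : Type*} [Field K] (ρ a b : K) :
    ((!![1, ρ; ρ, 1])⁻¹ *ᵥ ![a, b]) 0 = (a - ρ * b) / (1 - ρ ^ 2) := by
  rw [inv_def, adjugate_fin_two_of, det_fin_two_of, Ring.inverse_eq_inv']
  simp [mulVec, dotProduct, Fin.sum_univ_two]
  ring

theorem diagonal_mulVec_eq_iff {n K : Type*} [Fintype n] [DecidableEq n] [Field K]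
    {d : n → K} (hd : ∀ i, d i ≠ 0) {x y : n → K} :
    diagonal d *ᵥ x = y ↔ x = fun i => y i / d i := by
  simp only [funext_iff, mulVec_diagonal, eq_div_iff (hd _), mul_comm (d _)]

theorem div_le_abs_div (a b : ℝ) : |a| / b ≤ |a / b| := by
  simpa [abs_div] using le_abs_self (|a| / b)

theorem equity_neutral_invariance_general (γ ρ X σx lam lamX PX O VX : ℝ)
    (hρ1 : -1 < ρ) (hρ2 : ρ < 1) (hX : 0 < X) (hσx : 0 < σx)
    (hO : O ≠ 0) (hVX : VX ≠ 0)
    (A : Matrix (Fin 2) (Fin 2) ℝ)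
    (hA : A = !![Real.sqrt X, 0; 0, VX * σx * Real.sqrt X / O])
    (Φ : Matrix (Fin 2) (Fin 2) ℝ)
    (hΦ : Φ = !![1, 0; ρ, Real.sqrt (1 - ρ ^ 2)])
    (ηstar : Fin 2 → ℝ)
    (hη : ηstar = (1 / γ) • ((Φ * Φᵀ)⁻¹ *ᵥ
      ![Real.sqrt X * (lam + ρ * σx * PX), Real.sqrt X * (lamX + σx * PX)])) :
    (∃! π : Fin 2 → ℝ, Aᵀ *ᵥ π = ηstar) ∧
      ∀ π : Fin 2 → ℝ, Aᵀ *ᵥ π = ηstar →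
        π 0 = (lam - ρ * lamX) / (γ * (1 - ρ ^ 2)) ∧
          |lam - ρ * lamX| / (γ * (1 - ρ ^ 2)) ≤ |π 0| + |π 1| := by
  have hsqrtX : √X ≠ 0 := (Real.sqrt_pos.2 hX).ne'
  have hdiag : A = diagonal ![√X, VX * σx * √X / O] := by
    rw [hA, diagonal_fin_two]
    rfl
  have hsolve : ∀ π, Aᵀ *ᵥ π = ηstar ↔ π = fun i => ηstar i / ![√X, VX * σx * √X / O] i := by
    intro π
    rw [hdiag, diagonal_transpose]
    refine diagonal_mulVec_eq_iff fun i => ?_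
    fin_cases i
    · exact hsqrtX
    · exact div_ne_zero (by positivity) hO
  have hη0 : ηstar 0 = √X * ((lam - ρ * lamX) / (γ * (1 - ρ ^ 2))) := by
    rw [hη, hΦ, cholesky_fin_two_mul_transpose (by nlinarith), Pi.smul_apply,
      inv_mulVec_zero_fin_two, smul_eq_mul, ← div_div]
    ring
  refine ⟨by simpa only [hsolve] using existsUnique_eq, fun π hπ => ?_⟩
  have hπ0 : π 0 = (lam - ρ * lamX) / (γ * (1 - ρ ^ 2)) := by
    rw [(hsolve π).1 hπ]
    simp [hη0, hsqrtX]
  refine ⟨hπ0, ?_⟩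
  calc |lam - ρ * lamX| / (γ * (1 - ρ ^ 2)) ≤ |π 0| := hπ0 ▸ div_le_abs_div _ _
    _ ≤ |π 0| + |π 1| := le_add_of_nonneg_right (abs_nonneg _)

/-- With an equity-neutral (delta-zero) derivative, the unique solution of Σᵀπ = η*
has a stock allocation independent of the derivative choice, giving a natural lower
bound on the ℓ1 risk exposure. -/
theorem equity_neutral_invariance (γ ρ X σx lam lamX PX O VX : ℝ)
    (hγ : 0 < γ) (hρ1 : -1 < ρ) (hρ2 : ρ < 1) (hX : 0 < X) (hσx : 0 < σx)
    (hO : O ≠ 0) (hVX : VX ≠ 0)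
    (A : Matrix (Fin 2) (Fin 2) ℝ)
    (hA : A = !![Real.sqrt X, 0; 0, VX * σx * Real.sqrt X / O])
    (Φ : Matrix (Fin 2) (Fin 2) ℝ)
    (hΦ : Φ = !![1, 0; ρ, Real.sqrt (1 - ρ ^ 2)])
    (ηstar : Fin 2 → ℝ)
    (hη : ηstar = (1 / γ) • ((Φ * Φᵀ)⁻¹ *ᵥ
      ![Real.sqrt X * (lam + ρ * σx * PX), Real.sqrt X * (lamX + σx * PX)])) :
    (∃! π : Fin 2 → ℝ, Aᵀ *ᵥ π = ηstar) ∧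
      ∀ π : Fin 2 → ℝ, Aᵀ *ᵥ π = ηstar →
        π 0 = (lam - ρ * lamX) / (γ * (1 - ρ ^ 2)) ∧
          |lam - ρ * lamX| / (γ * (1 - ρ ^ 2)) ≤ |π 0| + |π 1| :=
  equity_neutral_invariance_general γ ρ X σx lam lamX PX O VX hρ1 hρ2 hX hσx hO hVX A hA Φ hΦ ηstar
    hη
end
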